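/- In the single circular inclusion setting, the truncation error of the localized characteristic function satisfies the bound ‖χ − χ^δ‖_{L^∞} ≤ log(R/(r+δ))/log(R/r), where χ^δ is the localized characteristic function on the annulus r < |x| < r+δ: explicitly χ^δ(x) = log((r+δ)/|x|)/log((r+δ)/r) on r ≤ |x| ≤ r+δ and 0 for |x| ≥ r+δ, and χ − χ^δ ≥ 0 everywhere. -/

import Mathlib

/-!
In the variable `log |x|` both `χ` and `χ^δ` are clamped affine functions. For `|x| ≤ r + δ`
the interpolation identity `χ = c + (1 - c) χ^δ`, with `c = χ(r + δ)`, puts `χ - χ^δ = c (1 - χ^δ)`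
in `[0, c]`; for `|x| ≥ r + δ` we have `χ^δ = 0` and `χ ≤ c` because `χ` decreases with `|x|`.
-/

open Real Set

/-- The radial profile of the harmonic function on the annulus `r < |x| < s` in `ℝ²` that equals
`1` on `|x| ≤ r` and `0` on `|x| ≥ s`. -/
noncomputable def annulusPotential (r s t : ℝ) : ℝ :=
  if t ≤ r then 1 else if t ≤ s then log (s / t) / log (s / r) else 0

namespace annulusPotential

variable {r s t R : ℝ}

theorem of_le (h : t ≤ r) : annulusPotential r s t = 1 := if_pos h

theorem of_mem_Ioc (h : t ∈ Ioc r s) :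
    annulusPotential r s t = log (s / t) / log (s / r) := by
  rw [annulusPotential, if_neg h.1.not_ge, if_pos h.2]

theorem of_lt (hrt : r < t) (hst : s < t) : annulusPotential r s t = 0 := by
  rw [annulusPotential, if_neg hrt.not_ge, if_neg hst.not_ge]

theorem eq_log_sub_div (hr : 0 < r) (h : t ∈ Ioc r s) :
    annulusPotential r s t = (log s - log t) / (log s - log r) := by
  have ht : 0 < t := hr.trans h.1
  rw [of_mem_Ioc h, log_div (by linarith [h.1, h.2]) ht.ne',
    log_div (by linarith [h.1, h.2]) hr.ne']

theorem mem_Icc (hr : 0 < r) : annulusPotential r s t ∈ Icc 0 1 := by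
  rcases le_or_gt t r with htr | hrt
  · simp [of_le htr]
  rcases le_or_gt t s with hts | hst
  · have ht : 0 < t := hr.trans hrt
    rw [eq_log_sub_div hr ⟨hrt, hts⟩]
    have hlog_rt : log r < log t := log_lt_log hr hrt
    have hlog_ts : log t ≤ log s := log_le_log ht hts
    constructor
    · exact div_nonneg (by linarith) (by linarith)
    · exact div_le_one_of_le₀ (by linarith) (by linarith)
  · simp [of_lt hrt hst]

theorem antitone (hr : 0 < r) : Antitone (annulusPotential r s) := by
  intro t₁ t₂ h
  rcases le_or_gt t₁ r with h₁ | h₁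
  · exact of_le h₁ ▸ (mem_Icc hr).2
  rcases le_or_gt t₂ s with h₂ | h₂
  · rw [eq_log_sub_div hr ⟨h₁, h.trans h₂⟩, eq_log_sub_div hr ⟨h₁.trans_le h, h₂⟩]
    have hsr : log r < log s := log_lt_log hr (by linarith)
    gcongr
    exact hr.trans h₁
  · exact of_lt (h₁.trans_le h) h₂ ▸ (mem_Icc hr).1

/-- In the variable `log t` both potentials are affine on `(r, s]`, and they agree at `t = r`. -/
theorem eq_add_mul_of_le (hr : 0 < r) (hrs : r < s) (hsR : s ≤ R) (ht : t ≤ s) :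
    annulusPotential r R t =
      annulusPotential r R s + (1 - annulusPotential r R s) * annulusPotential r s t := by
  rcases le_or_gt t r with htr | hrt
  · rw [of_le htr, of_le htr]
    ring
  have hlog_rs : log r < log s := log_lt_log hr hrs
  have hlog_sR : log s ≤ log R := log_le_log (hr.trans hrs) hsR
  have hsr : log s - log r ≠ 0 := by linarith
  have hRr : log R - log r ≠ 0 := by linarith
  rw [eq_log_sub_div hr ⟨hrt, ht.trans hsR⟩, eq_log_sub_div hr ⟨hrs, hsR⟩,
    eq_log_sub_div hr ⟨hrt, ht⟩]
  field_simp
  ring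

theorem sub_mem_Icc (hr : 0 < r) (hrs : r < s) (hsR : s ≤ R) (t : ℝ) :
    annulusPotential r R t - annulusPotential r s t ∈ Icc 0 (annulusPotential r R s) := by
  obtain ⟨hc₀, hc₁⟩ := mem_Icc (s := R) (t := s) hr
  rcases le_or_gt t s with hts | hst
  · obtain ⟨hp₀, hp₁⟩ := mem_Icc (s := s) (t := t) hr
    rw [eq_add_mul_of_le hr hrs hsR hts]
    constructor <;> nlinarith
  · rw [of_lt (hrs.trans hst) hst, sub_zero]
    exact ⟨(mem_Icc hr).1, antitone hr hst.le⟩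

end annulusPotential

/-- for a single circular inclusion `B(0,r)` inside `B(0,R)`,
with the explicit global characteristic function `χ` and its localized
counterpart `χ^δ` (supported in the annulus `r < |x| < r+δ`), one has
`χ - χ^δ ≥ 0` everywhere and
`‖χ - χ^δ‖_{L^∞} ≤ log(R/(r+δ))/log(R/r)`. -/
theorem stmt13 (r δ R : ℝ) (hr : 0 < r) (hδ : 0 < δ) (hR : r + δ < R)
    (χ χδ : EuclideanSpace ℝ (Fin 2) → ℝ)
    (hχ : ∀ x, χ x = if ‖x‖ ≤ r then 1
      else if ‖x‖ ≤ R then Real.log (R / ‖x‖) / Real.log (R / r) else 0)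
    (hχδ : ∀ x, χδ x = if ‖x‖ ≤ r then 1
      else if ‖x‖ ≤ r + δ then
        Real.log ((r + δ) / ‖x‖) / Real.log ((r + δ) / r) else 0) :
    (∀ x, 0 ≤ χ x - χδ x) ∧
    ∀ x, χ x - χδ x ≤ Real.log (R / (r + δ)) / Real.log (R / r) := by
  have hrs : r < r + δ := by linarith
  have hχ' : ∀ x, χ x = annulusPotential r R ‖x‖ := hχ
  have hχδ' : ∀ x, χδ x = annulusPotential r (r + δ) ‖x‖ := hχδ
  have hbound := annulusPotential.sub_mem_Icc hr hrs hR.le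
  rw [annulusPotential.of_mem_Ioc ⟨hrs, hR.le⟩] at hbound
  refine ⟨fun x => ?_, fun x => ?_⟩ <;> rw [hχ', hχδ']
  exacts [(hbound _).1, (hbound _).2]
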